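/- Operational completeness of the core gates: for proper intervals I_A, I_B, the predicates SEQ-gate (b₁ > a₁ ∧ b₂ > a₂ ∧ b₁ − a₂ < δ with δ = ∞), GUARD-gate (b₁ ≤ a₁ ∧ a₂ ≤ b₂ with not both equalities), SYNC-gate (I_A = I_B), and their argument swaps, together cover all 13 Allen relations: every Allen relation between I_A and I_B implies at least one of SEQ(A,B), SEQ(B,A), GUARD(A,B), GUARD(B,A), or SYNC(A,B) holds. -/
import Mathlib


def allen (a₁ a₂ b₁ b₂ : ℝ) : Fin 13 → Prop
  | 0 => a₂ < b₁
  | 1 => a₂ = b₁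
  | 2 => a₁ < b₁ ∧ b₁ < a₂ ∧ a₂ < b₂
  | 3 => a₁ = b₁ ∧ a₂ < b₂
  | 4 => b₁ < a₁ ∧ a₂ < b₂
  | 5 => b₁ < a₁ ∧ a₂ = b₂
  | 6 => a₁ = b₁ ∧ a₂ = b₂
  | 7 => b₂ < a₁
  | 8 => b₂ = a₁
  | 9 => b₁ < a₁ ∧ a₁ < b₂ ∧ b₂ < a₂
  | 10 => b₁ = a₁ ∧ b₂ < a₂
  | 11 => a₁ < b₁ ∧ b₂ < a₂
  | 12 => a₁ < b₁ ∧ b₂ = a₂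

/-- SEQ gate: Y starts strictly after X starts and ends strictly after X ends. -/
def seqGate (a₁ a₂ b₁ b₂ : ℝ) : Prop := a₁ < b₁ ∧ a₂ < b₂

/-- GUARD gate: strict containment I_X ⊆ I_Y, I_X ≠ I_Y. -/
def guardGate (a₁ a₂ b₁ b₂ : ℝ) : Prop :=
  b₁ ≤ a₁ ∧ a₂ ≤ b₂ ∧ ¬ (a₁ = b₁ ∧ a₂ = b₂)

/-- SYNC gate: identical intervals. -/
def syncGate (a₁ a₂ b₁ b₂ : ℝ) : Prop := a₁ = b₁ ∧ a₂ = b₂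

theorem gates_cover_allen (a₁ a₂ b₁ b₂ : ℝ) (hA : a₁ < a₂) (hB : b₁ < b₂) :
    ∀ i : Fin 13, allen a₁ a₂ b₁ b₂ i →
      seqGate a₁ a₂ b₁ b₂ ∨ seqGate b₁ b₂ a₁ a₂ ∨
      guardGate a₁ a₂ b₁ b₂ ∨ guardGate b₁ b₂ a₁ a₂ ∨
      syncGate a₁ a₂ b₁ b₂ := by
  intro i h
  fin_cases i <;> simp only [allen] at h <;>
    unfold seqGate guardGate syncGate <;>
    first
      | (left; constructor <;> linarith)
      | (right; left; constructor <;> linarith)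
      | (right; right; left; refine ⟨by linarith, by linarith, ?_⟩; rintro ⟨h1,h2⟩; linarith)
      | (right; right; right; left; refine ⟨by linarith, by linarith, ?_⟩; rintro ⟨h1,h2⟩; linarith)
      | (right; right; right; right; exact ⟨h.1, h.2⟩)
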